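/- arXiv:0902.3039 — 2 statements merged into one kernel-verified Lean document; each statement's English description precedes it below -/
import Mathlib

section
/- For every x ∈ [0,1), the inequality (arccos x)² + x·√(1−x²)·arccos(x) + 2x² − 2 > 0 holds. -/
open Real Set

/-!
Put `θ = arccos x ∈ (0, π/2]`, so that `x = cos θ` and `√(1 - x²) = sin θ`. With `u = 2θ` the
expression becomes `u²/4 + (u/4) sin u + cos u - 1`. The Taylor polynomials of `sin` and `cos`
at `0` alternately under- and overestimate them on `[0, ∞)`; bounding `sin u` below by its degree-7
and `cos u` below by its degree-6 polynomial, everything cancels except `u⁶ (14 - u²) / 20160`,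
which is positive because `u ≤ π`.
-/

open Finset Nat

noncomputable def cosTaylor (n : ℕ) (x : ℝ) : ℝ :=
  ∑ k ∈ range n, (-1) ^ k * x ^ (2 * k) / (2 * k)!

noncomputable def sinTaylor (n : ℕ) (x : ℝ) : ℝ :=
  ∑ k ∈ range n, (-1) ^ k * x ^ (2 * k + 1) / (2 * k + 1)!

lemma hasDerivAt_pow_succ_div_factorial (m : ℕ) (x : ℝ) :
    HasDerivAt (fun y : ℝ => y ^ (m + 1) / (m + 1)!) (x ^ m / m !) x := by
  refine ((hasDerivAt_pow (m + 1) x).div_const ((m + 1)! : ℝ)).congr_deriv ?_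
  rw [factorial_succ]
  push_cast
  field_simp

lemma hasDerivAt_sinTaylor (n : ℕ) (x : ℝ) : HasDerivAt (sinTaylor n) (cosTaylor n x) x := by
  unfold sinTaylor cosTaylor
  refine HasDerivAt.fun_sum fun k _ => ?_
  simpa only [mul_div_assoc] using
    (hasDerivAt_pow_succ_div_factorial (2 * k) x).const_mul ((-1 : ℝ) ^ k)

lemma hasDerivAt_cosTaylor_succ (n : ℕ) (x : ℝ) :
    HasDerivAt (cosTaylor (n + 1)) (-sinTaylor n x) x := by
  have hsplit : cosTaylor (n + 1) =
      fun y => 1 - ∑ k ∈ range n, (-1 : ℝ) ^ k * (y ^ (2 * k + 1 + 1) / (2 * k + 1 + 1)!) := by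
    ext y
    rw [cosTaylor, sum_range_succ', sub_eq_add_neg, ← sum_neg_distrib, add_comm]
    simp only [pow_zero, mul_zero, factorial_zero, cast_one, div_one, mul_one]
    congr 1
    refine sum_congr rfl fun k _ => ?_
    rw [mul_add, mul_one, pow_succ]
    ring
  rw [hsplit, sinTaylor]
  refine (HasDerivAt.fun_sum fun k _ => ?_).const_sub 1
  simpa only [mul_div_assoc] using
    (hasDerivAt_pow_succ_div_factorial (2 * k + 1) x).const_mul ((-1 : ℝ) ^ k)

lemma nonneg_of_hasDerivAt_nonneg {f f' : ℝ → ℝ} (hf : ∀ y, HasDerivAt f (f' y) y)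
    (hf' : ∀ y, 0 ≤ y → 0 ≤ f' y) (h0 : f 0 = 0) {y : ℝ} (hy : 0 ≤ y) : 0 ≤ f y := by
  have hmono : MonotoneOn f (Ici 0) :=
    monotoneOn_of_hasDerivWithinAt_nonneg (convex_Ici 0)
      (fun z _ => (hf z).continuousAt.continuousWithinAt)
      (fun z _ => (hf z).hasDerivWithinAt)
      (fun z hz => hf' z (interior_subset hz))
  simpa [h0] using hmono self_mem_Ici hy hy

lemma sinTaylor_bound_of_cosTaylor_bound {n : ℕ}
    (hcos : ∀ y, 0 ≤ y → 0 ≤ (-1) ^ n * (cos y - cosTaylor n y)) {y : ℝ} (hy : 0 ≤ y) :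
    0 ≤ (-1) ^ n * (sin y - sinTaylor n y) := by
  refine nonneg_of_hasDerivAt_nonneg (f := fun y => (-1) ^ n * (sin y - sinTaylor n y))
    (fun z => ?_) hcos (by simp [sinTaylor]) hy
  exact ((hasDerivAt_sin z).sub (hasDerivAt_sinTaylor n z)).const_mul _

lemma cosTaylor_bound_of_sinTaylor_bound {n : ℕ}
    (hsin : ∀ y, 0 ≤ y → 0 ≤ (-1) ^ n * (sin y - sinTaylor n y)) {y : ℝ} (hy : 0 ≤ y) :
    0 ≤ (-1) ^ (n + 1) * (cos y - cosTaylor (n + 1) y) := by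
  refine nonneg_of_hasDerivAt_nonneg
    (f := fun y => (-1) ^ (n + 1) * (cos y - cosTaylor (n + 1) y)) (fun z => ?_) hsin ?_ hy
  · exact (((hasDerivAt_cos z).sub (hasDerivAt_cosTaylor_succ n z)).const_mul _).congr_deriv
      (by ring)
  · simp [cosTaylor, sum_range_succ']

theorem neg_one_pow_mul_cos_sub_cosTaylor_nonneg (n : ℕ) {y : ℝ} (hy : 0 ≤ y) :
    0 ≤ (-1) ^ (n + 1) * (cos y - cosTaylor (n + 1) y) := by
  induction n generalizing y with
  | zero => simp [cosTaylor, cos_le_one]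
  | succ n ih =>
    exact cosTaylor_bound_of_sinTaylor_bound
      (fun _ hz => sinTaylor_bound_of_cosTaylor_bound (fun _ => ih) hz) hy

theorem neg_one_pow_mul_sin_sub_sinTaylor_nonneg (n : ℕ) {y : ℝ} (hy : 0 ≤ y) :
    0 ≤ (-1) ^ (n + 1) * (sin y - sinTaylor (n + 1) y) :=
  sinTaylor_bound_of_cosTaylor_bound (fun _ => neg_one_pow_mul_cos_sub_cosTaylor_nonneg n) hy

lemma sq_add_cos_mul_sin_mul_add_two_mul_cos_sq_sub_two_pos {θ : ℝ} (h0 : 0 < θ)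
    (h1 : θ ^ 2 < 7 / 2) : 0 < θ ^ 2 + cos θ * sin θ * θ + 2 * cos θ ^ 2 - 2 := by
  have hu : 0 ≤ 2 * θ := by positivity
  have hcos : 1 - (2 * θ) ^ 2 / 2 + (2 * θ) ^ 4 / 24 - (2 * θ) ^ 6 / 720 ≤ cos (2 * θ) := by
    have := neg_one_pow_mul_cos_sub_cosTaylor_nonneg 3 hu
    norm_num [cosTaylor, sum_range_succ, factorial] at this
    linarith
  have hsin : 2 * θ - (2 * θ) ^ 3 / 6 + (2 * θ) ^ 5 / 120 - (2 * θ) ^ 7 / 5040 ≤ sin (2 * θ) := by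
    have := neg_one_pow_mul_sin_sub_sinTaylor_nonneg 3 hu
    norm_num [sinTaylor, sum_range_succ, factorial] at this
    linarith
  rw [cos_two_mul] at hcos
  rw [sin_two_mul] at hsin
  have hpoly : 0 < (2 * θ) ^ 6 * (14 - (2 * θ) ^ 2) := mul_pos (by positivity) (by linarith)
  linarith [mul_le_mul_of_nonneg_left hsin h0.le]

theorem arccos_quadratic_positive :
    ∀ x ∈ Set.Ico (0 : ℝ) 1,
      (Real.arccos x) ^ 2 + x * Real.sqrt (1 - x ^ 2) * Real.arccos x + 2 * x ^ 2 - 2 > 0 := by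
  rintro x ⟨hx0, hx1⟩
  have hθ : arccos x ^ 2 < 7 / 2 := by
    have hle : arccos x ≤ π / 2 := arccos_le_pi_div_two.mpr hx0
    nlinarith [pi_lt_d2, arccos_nonneg x]
  have := sq_add_cos_mul_sin_mul_add_two_mul_cos_sq_sub_two_pos (arccos_pos.mpr hx1) hθ
  rwa [cos_arccos (by linarith) hx1.le, sin_arccos] at this
end

section
/- For every x ∈ (0,1), the inequality arccos(x) < (√(1+x) + 2√2)·√(1−x) / (1 + √(2(1+x))) holds; moreover, the function G(x) = arccos(x) − (√(1+x) + 2√2)·√(1−x) / (1 + √(2(1+x))) is strictly increasing on (0,1). -/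
/-! Substitute x = cos 2t with t = arccos x / 2 ∈ [0, π/2]. Then √(1 + x) = √2 cos t and
√(1 - x) = √2 sin t, and G(x) = -2 (arcBound t - t) with
arcBound t = sin t (2 + cos t) / (1 + 2 cos t). Writing c = cos t, one finds
arcBound'(t) - 1 = 2 (1 - c)² (1 + c) / (1 + 2c)² > 0 for 0 < t < 2π/3, so arcBound t - t
increases strictly from its value 0 at t = 0. Since arccos is decreasing, G is negative and
strictly increasing on (0, 1). -/

open Real Set

noncomputable def arcBound (t : ℝ) : ℝ := sin t * (2 + cos t) / (1 + 2 * cos t)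

theorem arcBound_zero : arcBound 0 = 0 := by simp [arcBound]

theorem hasDerivAt_arcBound {t : ℝ} (ht : 1 + 2 * cos t ≠ 0) :
    HasDerivAt arcBound (1 + 2 * (1 - cos t) ^ 2 * (1 + cos t) / (1 + 2 * cos t) ^ 2) t := by
  have h := ((hasDerivAt_sin t).mul ((hasDerivAt_cos t).const_add 2)).div
    (((hasDerivAt_cos t).const_mul 2).const_add 1) ht
  refine h.congr_deriv ?_
  rw [one_add_div (pow_ne_zero 2 ht)]
  congr 1
  simp only [Pi.mul_apply]
  linear_combination 3 * sin_sq_add_cos_sq t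

theorem neg_half_lt_cos {t : ℝ} (h₀ : 0 ≤ t) (h₁ : t < 2 * π / 3) : -(1 / 2) < cos t := by
  have : cos (2 * π / 3) = -(1 / 2) := by
    rw [show 2 * π / 3 = π - π / 3 by ring, cos_pi_sub, cos_pi_div_three]
  rw [← this]
  exact cos_lt_cos_of_nonneg_of_le_pi h₀ (by linarith [pi_pos]) h₁

theorem strictMonoOn_arcBound_sub_id :
    StrictMonoOn (fun t => arcBound t - t) (Ico 0 (2 * π / 3)) := by
  refine strictMonoOn_of_deriv_pos (convex_Ico _ _) ?_ fun t ht => ?_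
  · intro t ht
    have := neg_half_lt_cos ht.1 ht.2
    exact ((hasDerivAt_arcBound (by linarith)).continuousAt.sub continuousAt_id).continuousWithinAt
  · rw [interior_Ico] at ht
    have hc := neg_half_lt_cos ht.1.le ht.2
    have hc1 : cos t < 1 := by
      rw [← cos_zero]
      exact cos_lt_cos_of_nonneg_of_le_pi le_rfl (by linarith [pi_pos, ht.2]) ht.1
    have hd : HasDerivAt (fun t => arcBound t - t) _ t :=
      (hasDerivAt_arcBound (by linarith)).sub (hasDerivAt_id' t)
    rw [hd.deriv]
    have h₁ : 0 < 1 - cos t := by linarith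
    have h₂ : 0 < 1 + cos t := by linarith
    have h₃ : 0 < 1 + 2 * cos t := by linarith
    have := div_pos (mul_pos (mul_pos two_pos (pow_pos h₁ 2)) h₂) (pow_pos h₃ 2)
    linarith

theorem arccos_sub_eq_arcBound {x : ℝ} (hx : x ∈ Icc (-1) 1) :
    arccos x - (√(1 + x) + 2 * √2) * √(1 - x) / (1 + √(2 * (1 + x))) =
      -2 * (arcBound (arccos x / 2) - arccos x / 2) := by
  obtain ⟨t, ht⟩ : ∃ t, arccos x = 2 * t := ⟨arccos x / 2, by ring⟩
  have ht₀ : 0 ≤ t := by linarith [arccos_nonneg x]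
  have ht₁ : t ≤ π / 2 := by linarith [arccos_le_pi x]
  have hx : x = cos (2 * t) := by rw [← ht, cos_arccos hx.1 hx.2]
  have hc : 0 ≤ cos t := cos_nonneg_of_mem_Icc ⟨by linarith [pi_pos], ht₁⟩
  have hs : 0 ≤ sin t := sin_nonneg_of_nonneg_of_le_pi ht₀ (by linarith [pi_pos])
  have h1 : √(1 + x) = √2 * cos t := by
    rw [hx, cos_two_mul, show 1 + (2 * cos t ^ 2 - 1) = 2 * cos t ^ 2 by ring,
      sqrt_mul zero_le_two, sqrt_sq hc]
  have h2 : √(1 - x) = √2 * sin t := by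
    rw [hx, cos_two_mul, show 1 - (2 * cos t ^ 2 - 1) = 2 * sin t ^ 2 by
      linear_combination -2 * sin_sq_add_cos_sq t, sqrt_mul zero_le_two, sqrt_sq hs]
  have h3 : √(2 * (1 + x)) = 2 * cos t := by
    rw [sqrt_mul zero_le_two, h1, ← mul_assoc, mul_self_sqrt zero_le_two]
  rw [h1, h2, h3, arcBound, ht, mul_div_cancel_left₀ t two_ne_zero]
  linear_combination -(sin t * cos t + 2 * sin t) / (1 + 2 * cos t) * sq_sqrt zero_le_two

theorem arccos_div_two_mem_Ico (x : ℝ) : arccos x / 2 ∈ Ico 0 (2 * π / 3) :=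
  ⟨by linarith [arccos_nonneg x], by linarith [arccos_le_pi x, pi_pos]⟩

theorem arccos_lt_and_G_strict_mono :
    (∀ x ∈ Set.Ioo (0 : ℝ) 1,
      Real.arccos x <
        (Real.sqrt (1 + x) + 2 * Real.sqrt 2) * Real.sqrt (1 - x) /
          (1 + Real.sqrt (2 * (1 + x)))) ∧
    StrictMonoOn
      (fun x : ℝ => Real.arccos x -
        (Real.sqrt (1 + x) + 2 * Real.sqrt 2) * Real.sqrt (1 - x) /
          (1 + Real.sqrt (2 * (1 + x))))
      (Set.Ioo 0 1) := by
  have hIcc : ∀ x ∈ Ioo (0 : ℝ) 1, x ∈ Icc (-1) 1 := fun x hx => ⟨by linarith [hx.1], hx.2.le⟩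
  constructor
  · intro x hx
    have h := strictMonoOn_arcBound_sub_id (arccos_div_two_mem_Ico 1) (arccos_div_two_mem_Ico x)
      (by simpa using arccos_pos.2 hx.2)
    simp only [arccos_one, zero_div, arcBound_zero, sub_zero] at h
    linarith [arccos_sub_eq_arcBound (hIcc x hx)]
  · intro x hx y hy hxy
    have h := strictMonoOn_arcBound_sub_id (arccos_div_two_mem_Ico y) (arccos_div_two_mem_Ico x)
      (by linarith [strictAntiOn_arccos (hIcc x hx) (hIcc y hy) hxy])
    simp only [arccos_sub_eq_arcBound (hIcc x hx), arccos_sub_eq_arcBound (hIcc y hy)]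
    linarith
end
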